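/- Let G be a finite DAG with unique source s and unique sink t, and let H ∈ U(P_G) be a nonempty union of s-t paths with ear decomposition ∅ = H₋₁ ⋖ H₀ ⋖ … ⋖ H_D = H in U(P_G), where H_k = H_{k−1} ∪ p_k for s-t paths p₀,…,p_D. Then every vector f ∈ ℝ^{E(G)} satisfying total flow 1 out of s, flow conservation at internal vertices, and f_e = 0 for e ∉ H, is an affine combination of the indicator vectors 𝟙(p₀),…,𝟙(p_D). -/

import Mathlib

/-!
Let `H_k = p₀ ∪ ⋯ ∪ p_k` and let `f` be supported on `H_k` and conserved away from `s` and `t`.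
Because `H_{k-1} ⋖ H_k`, the arcs of `p_k` outside `H_{k-1}` form one segment of `p_k` whose
inner vertices lie on no arc of `H_{k-1}`; conservation at these vertices (each has exactly one
arc in and one arc out inside `H_k`, by acyclicity) makes `f` constant, say `a`, on the segment.
Then `f - a • 𝟙(p_k)` is supported on `H_{k-1}`, so by induction every such `f` lies in the span of
`𝟙(p₀), …, 𝟙(p_D)`. The flow value out of `s` is linear and equals `1` on each `𝟙(p_i)`, so the
coefficients of a unit flow sum to `1`.
-/

/-- `l` is a directed path from `s` to `t` in the graph with arc set `E`,
source map `src` and target map `tgt`, given as a nonempty list of consecutive arcs. -/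
def IsPathFrom {V E : Type} (src tgt : E → V) (s t : V) (l : List E) : Prop :=
  l ≠ [] ∧ (∀ e ∈ l.head?, src e = s) ∧ (∀ e ∈ l.getLast?, tgt e = t) ∧
    l.Chain' (fun e f => tgt e = src f)

/-- The arc sets of directed paths from `s` to `t`. -/
def pathEdgeSets {V E : Type} [DecidableEq E] (src tgt : E → V) (s t : V) :
    Set (Finset E) :=
  {P | ∃ l : List E, IsPathFrom src tgt s t l ∧ l.Nodup ∧ P = l.toFinset}

/-- The arc sets which are unions of arc sets of `s`-`t` paths. -/
def unionOfPaths {V E : Type} [DecidableEq E] (src tgt : E → V) (s t : V) :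
    Set (Finset E) :=
  {H | ∃ Ps : Set (Finset E), Ps ⊆ pathEdgeSets src tgt s t ∧ (H : Set E) = ⋃ p ∈ Ps, (p : Set E)}

/-- The graph is acyclic: no directed cycles. -/
def IsAcyclicDigraph {V E : Type} (src tgt : E → V) : Prop :=
  ∀ v : V, ¬ Relation.TransGen (fun a b => ∃ e, src e = a ∧ tgt e = b) v v

/-- `s` is the unique source: exactly the vertices with no incoming arc are `s`. -/
def IsUniqueSource {V E : Type} (src tgt : E → V) (s : V) : Prop :=
  ∀ v : V, (¬ ∃ e, tgt e = v) ↔ v = s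

/-- `t` is the unique sink: exactly the vertices with no outgoing arc are `t`. -/
def IsUniqueSink {V E : Type} (src tgt : E → V) (t : V) : Prop :=
  ∀ v : V, (¬ ∃ e, src e = v) ↔ v = t

open Classical in
/-- The set of unit `s`-`t` flows supported on `K`. -/
noncomputable def flowSet {V E : Type} [Fintype E] (src tgt : E → V) (s t : V)
    (K : Set E) : Set (E → ℝ) :=
  {f | (∀ e, 0 ≤ f e) ∧ (∀ e, e ∉ K → f e = 0) ∧
    (∑ e ∈ Finset.univ.filter (fun e => src e = s), f e = 1) ∧
    ∀ v : V, v ≠ s → v ≠ t →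
      ∑ e ∈ Finset.univ.filter (fun e => tgt e = v), f e =
        ∑ e ∈ Finset.univ.filter (fun e => src e = v), f e}

open Classical in
/-- `D(K) = |K| - |V(K) \ {s,t}| - 1` where `V(K)` is the set of endpoints of arcs of `K`. -/
noncomputable def Dval {V E : Type} [Fintype V] [DecidableEq E] (src tgt : E → V)
    (s t : V) (K : Finset E) : ℤ :=
  (K.card : ℤ) - ((K.image src ∪ K.image tgt) \ {s, t}).card - 1

open Finset

section Development

variable {V E : Type} {src tgt : E → V} {s t : V}

section Walks

variable {l : List E}

lemma transGen_src_tgt_of_isChain (hl : l.IsChain (fun e f => tgt e = src f)) {i j : ℕ}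
    (hij : i ≤ j) (hj : j < l.length) :
    Relation.TransGen (fun a b => ∃ e, src e = a ∧ tgt e = b) (src l[i]) (tgt l[j]) := by
  induction j, hij using Nat.le_induction with
  | base => exact .single ⟨l[i], rfl, rfl⟩
  | succ j _ ih => exact (ih (by omega)).tail ⟨l[j + 1], (hl.getElem j hj).symm, rfl⟩

namespace IsAcyclicDigraph

variable (ha : IsAcyclicDigraph src tgt) (hl : l.IsChain (fun e f => tgt e = src f))
include ha hl

lemma src_ne_tgt_of_le {i j : ℕ} (hij : i ≤ j) (hj : j < l.length) :
    src l[i] ≠ tgt l[j] := fun h =>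
  ha _ (h ▸ transGen_src_tgt_of_isChain hl hij hj)

lemma tgt_getElem_inj {i j : ℕ} (hi : i < l.length) (hj : j < l.length)
    (h : tgt l[i] = tgt l[j]) : i = j := by
  by_contra hne
  rcases Nat.lt_or_gt_of_ne hne with hij | hij
  · exact ha.src_ne_tgt_of_le hl hij hj (hl.getElem i (by omega) ▸ h)
  · exact ha.src_ne_tgt_of_le hl hij hi (hl.getElem j (by omega) ▸ h.symm)

lemma src_getElem_inj {i j : ℕ} (hi : i < l.length) (hj : j < l.length)
    (h : src l[i] = src l[j]) : i = j := by
  by_contra hne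
  rcases Nat.lt_or_gt_of_ne hne with hij | hij
  · obtain ⟨j, rfl⟩ : ∃ j', j = j' + 1 := ⟨j - 1, by omega⟩
    exact ha.src_ne_tgt_of_le hl (by omega : i ≤ j) (by omega)
      (h.trans (hl.getElem j hj).symm)
  · obtain ⟨i, rfl⟩ : ∃ i', i = i' + 1 := ⟨i - 1, by omega⟩
    exact ha.src_ne_tgt_of_le hl (by omega : j ≤ i) (by omega)
      (h.symm.trans (hl.getElem i hi).symm)

lemma nodup_of_isChain : l.Nodup :=
  List.nodup_iff_injective_get.mpr fun i j h =>
    Fin.ext (ha.src_getElem_inj hl i.isLt j.isLt (congrArg src h))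

end IsAcyclicDigraph

end Walks

namespace IsPathFrom

variable {l : List E}

lemma length_pos (h : IsPathFrom src tgt s t l) : 0 < l.length :=
  List.length_pos_iff.mpr h.1

lemma isChain (h : IsPathFrom src tgt s t l) : l.IsChain (fun e f => tgt e = src f) :=
  h.2.2.2

lemma src_getElem_zero (h : IsPathFrom src tgt s t l) : src (l[0]'h.length_pos) = s :=
  h.2.1 _ (by simp [List.head?_eq_getElem?])

lemma tgt_getElem_last (h : IsPathFrom src tgt s t l) :
    tgt (l[l.length - 1]'(by have := h.length_pos; omega)) = t :=
  h.2.2.1 _ (by simp [List.getLast?_eq_getElem?])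

lemma of_getElem (hpos : 0 < l.length) (hs : src l[0] = s)
    (ht : tgt (l[l.length - 1]'(by omega)) = t) (hl : l.IsChain (fun e f => tgt e = src f)) :
    IsPathFrom src tgt s t l :=
  ⟨List.length_pos_iff.mp hpos, by simpa [List.head?_eq_getElem?, hpos] using hs,
    by simpa [List.getLast?_eq_getElem?, hpos] using ht, hl⟩

lemma take (h : IsPathFrom src tgt s t l) {j : ℕ} (hj : j < l.length) :
    IsPathFrom src tgt s (tgt l[j]) (l.take (j + 1)) :=
  of_getElem (by simp; omega) (by simpa using h.src_getElem_zero)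
    (by simp only [List.getElem_take]; congr 2; simp; omega) (h.isChain.take _)

lemma drop (h : IsPathFrom src tgt s t l) {m : ℕ} (hm : m < l.length) :
    IsPathFrom src tgt (src l[m]) t (l.drop m) :=
  of_getElem (by simp; omega) (by simp)
    (by simp only [List.getElem_drop]; convert h.tgt_getElem_last using 3; simp; omega)
    (h.isChain.drop _)

lemma append {u : V} {l' : List E} (h : IsPathFrom src tgt s u l) (h' : IsPathFrom src tgt u t l') :
    IsPathFrom src tgt s t (l ++ l') := by
  refine ⟨by simp [h.1], ?_, ?_, h.isChain.append h'.isChain ?_⟩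
  · rw [List.head?_append_of_ne_nil _ h.1]; exact h.2.1
  · rw [List.getLast?_append_of_ne_nil _ h'.1]; exact h'.2.2.1
  · intro x hx y hy
    rw [h.2.2.1 x hx, h'.2.1 y hy]

end IsPathFrom

section UnionOfPaths

variable [DecidableEq E] {H : Finset E}

lemma biUnion_mem_unionOfPaths {ι : Type*} (S : Finset ι) {p : ι → Finset E}
    (hp : ∀ i ∈ S, p i ∈ pathEdgeSets src tgt s t) : S.biUnion p ∈ unionOfPaths src tgt s t :=
  ⟨p '' S, by rintro _ ⟨i, hi, rfl⟩; exact hp i hi, by simp⟩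

lemma union_mem_unionOfPaths {P : Finset E} (hH : H ∈ unionOfPaths src tgt s t)
    (hP : P ∈ pathEdgeSets src tgt s t) : H ∪ P ∈ unionOfPaths src tgt s t := by
  obtain ⟨Ps, hPs, hHPs⟩ := hH
  exact ⟨insert P Ps, Set.insert_subset hP hPs, by simp [hHPs, Set.union_comm]⟩

lemma exists_path_of_mem_unionOfPaths (hH : H ∈ unionOfPaths src tgt s t) {e : E} (he : e ∈ H) :
    ∃ l, IsPathFrom src tgt s t l ∧ e ∈ l ∧ ∀ x ∈ l, x ∈ H := by
  obtain ⟨Ps, hPs, hHPs⟩ := hH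
  have : e ∈ ⋃ P ∈ Ps, (P : Set E) := hHPs ▸ he
  obtain ⟨P, hP, heP⟩ := Set.mem_iUnion₂.mp this
  obtain ⟨l, hl, -, rfl⟩ := hPs hP
  refine ⟨l, hl, by simpa using heP, fun x hx => ?_⟩
  have : x ∈ (H : Set E) := hHPs ▸ Set.mem_biUnion hP (by simpa using hx)
  exact this

lemma exists_path_to_sink_of_mem (hH : H ∈ unionOfPaths src tgt s t) {e : E} (he : e ∈ H)
    {v : V} (hv : src e = v ∨ tgt e = v) (hvt : v ≠ t) :
    ∃ q, IsPathFrom src tgt v t q ∧ ∀ x ∈ q, x ∈ H := by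
  obtain ⟨l, hl, hel, hlH⟩ := exists_path_of_mem_unionOfPaths hH he
  obtain ⟨r, hr, rfl⟩ := List.mem_iff_getElem.mp hel
  rcases hv with rfl | rfl
  · exact ⟨_, hl.drop hr, fun x hx => hlH x (List.mem_of_mem_drop hx)⟩
  · have hr' : r + 1 < l.length := by
      by_contra hlast
      exact hvt (by convert hl.tgt_getElem_last using 3; omega)
    exact ⟨_, hl.isChain.getElem r hr' ▸ hl.drop hr', fun x hx => hlH x (List.mem_of_mem_drop hx)⟩

end UnionOfPaths

section Flows

variable [Fintype E]

open Classical in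
noncomputable def arcSum (φ : E → V) (v : V) : (E → ℝ) →ₗ[ℝ] ℝ where
  toFun f := ∑ e ∈ univ.filter (fun e => φ e = v), f e
  map_add' f g := sum_add_distrib
  map_smul' c f := by simp [mul_sum]

open Classical in
lemma arcSum_apply (φ : E → V) (v : V) (f : E → ℝ) :
    arcSum φ v f = ∑ e ∈ univ.filter (fun e => φ e = v), f e := rfl

noncomputable def conservedFlows (src tgt : E → V) (s t : V) : Submodule ℝ (E → ℝ) where
  carrier := {f | ∀ v, v ≠ s → v ≠ t → arcSum tgt v f = arcSum src v f}
  add_mem' hf hg v hs ht := by simp [hf v hs ht, hg v hs ht]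
  zero_mem' _ _ _ := by simp
  smul_mem' c f hf v hs ht := by simp [hf v hs ht]

lemma arcSum_eq_apply_getElem {φ : E → V} {l : List E}
    (hinj : ∀ {i j} (hi : i < l.length) (hj : j < l.length), φ l[i] = φ l[j] → i = j)
    {m : ℕ} (hm : m < l.length) {f : E → ℝ} (hf : ∀ e ∉ l, φ e = φ l[m] → f e = 0) :
    arcSum φ (φ l[m]) f = f l[m] := by
  classical
  rw [arcSum_apply]
  refine sum_eq_single_of_mem _ (by simp) fun e he hne => ?_
  have he' : φ e = φ l[m] := (mem_filter.mp he).2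
  by_cases hel : e ∈ l
  · obtain ⟨r, hr, rfl⟩ := List.mem_iff_getElem.mp hel
    obtain rfl := hinj hr hm he'
    exact absurd rfl hne
  · exact hf e hel he'

end Flows

section PathFlows

variable [Fintype E] {l : List E} {f : E → ℝ}

lemma arcSum_tgt_getElem (ha : IsAcyclicDigraph src tgt) (hl : l.IsChain (fun e f => tgt e = src f))
    {m : ℕ} (hm : m < l.length) (hout : ∀ e ∉ l, tgt e = tgt l[m] → f e = 0) :
    arcSum tgt (tgt l[m]) f = f l[m] :=
  arcSum_eq_apply_getElem (ha.tgt_getElem_inj hl) hm hout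

lemma arcSum_src_tgt_getElem (ha : IsAcyclicDigraph src tgt)
    (hl : l.IsChain (fun e f => tgt e = src f)) {m : ℕ} (hm : m + 1 < l.length)
    (hout : ∀ e ∉ l, src e = tgt l[m] → f e = 0) :
    arcSum src (tgt l[m]) f = f l[m + 1] := by
  rw [hl.getElem m hm] at hout ⊢
  exact arcSum_eq_apply_getElem (ha.src_getElem_inj hl) hm hout

lemma apply_getElem_eq_apply_succ (ha : IsAcyclicDigraph src tgt)
    (hl : IsPathFrom src tgt s t l) (hf : f ∈ conservedFlows src tgt s t) {m : ℕ}
    (hm : m + 1 < l.length) (hvt : tgt l[m] ≠ t)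
    (hout : ∀ e ∉ l, src e = tgt l[m] ∨ tgt e = tgt l[m] → f e = 0) :
    f l[m] = f l[m + 1] := by
  have hvs : tgt l[m] ≠ s :=
    hl.src_getElem_zero ▸ (ha.src_ne_tgt_of_le hl.isChain (Nat.zero_le m) _).symm
  calc f l[m] = arcSum tgt (tgt l[m]) f :=
        (arcSum_tgt_getElem ha hl.isChain _ fun e he h => hout e he (.inr h)).symm
    _ = arcSum src (tgt l[m]) f := hf _ hvs hvt
    _ = f l[m + 1] := arcSum_src_tgt_getElem ha hl.isChain hm fun e he h => hout e he (.inl h)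

variable [DecidableEq E] {P : Finset E}

lemma arcSum_indicator_of_mem_pathEdgeSets (ha : IsAcyclicDigraph src tgt)
    (hP : P ∈ pathEdgeSets src tgt s t) : arcSum src s ((P : Set E).indicator 1) = 1 := by
  obtain ⟨l, hl, -, rfl⟩ := hP
  rw [← hl.src_getElem_zero,
    arcSum_eq_apply_getElem (ha.src_getElem_inj hl.isChain) _ fun e he _ => by simp [he]]
  simp

lemma indicator_mem_conservedFlows (ha : IsAcyclicDigraph src tgt)
    (hP : P ∈ pathEdgeSets src tgt s t) : (P : Set E).indicator 1 ∈ conservedFlows src tgt s t := by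
  classical
  obtain ⟨l, hl, -, rfl⟩ := hP
  intro v hvs hvt
  by_cases hv : ∃ m, ∃ hm : m < l.length, tgt l[m] = v
  · obtain ⟨m, hm, rfl⟩ := hv
    have hm' : m + 1 < l.length := by
      by_contra hlast
      exact hvt (by convert hl.tgt_getElem_last using 3; omega)
    rw [arcSum_tgt_getElem ha hl.isChain hm fun e he _ => by simp [he],
      arcSum_src_tgt_getElem ha hl.isChain hm' fun e he _ => by simp [he]]
    simp
  · push Not at hv
    have hvl : ∀ e ∈ l, src e = v → False := by
      intro e he hev
      obtain ⟨r, hr, rfl⟩ := List.mem_iff_getElem.mp he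
      rcases r with _ | r
      · exact hvs (hev ▸ hl.src_getElem_zero)
      · exact hv r (by omega) (hl.isChain.getElem r hr ▸ hev)
    rw [arcSum_apply, arcSum_apply, sum_eq_zero, sum_eq_zero] <;> intro e he <;>
      rw [Set.indicator_of_notMem]
    · exact fun hel => hvl e (by simpa using hel) (mem_filter.mp he).2
    · intro hel
      obtain ⟨r, hr, rfl⟩ := List.mem_iff_getElem.mp (by simpa using hel)
      exact hv r hr (mem_filter.mp he).2

end PathFlows

section Ears

variable [DecidableEq E] {H : Finset E} {l : List E}

lemma exists_path_extending_take (hH : H ∈ unionOfPaths src tgt s t)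
    (hl : IsPathFrom src tgt s t l) {j : ℕ} (hj : j < l.length)
    (htouch : tgt l[j] = t ∨ ∃ e ∈ H, src e = tgt l[j] ∨ tgt e = tgt l[j]) :
    ∃ w, IsPathFrom src tgt s t w ∧ l.take (j + 1) ⊆ w ∧
      ∀ x ∈ w, x ∈ l.take (j + 1) ∨ x ∈ H := by
  by_cases hjt : tgt l[j] = t
  · exact ⟨_, hjt ▸ hl.take hj, List.Subset.refl _, fun x hx => .inl hx⟩
  · obtain ⟨e, heH, hev⟩ := htouch.resolve_left hjt
    obtain ⟨q, hq, hqH⟩ := exists_path_to_sink_of_mem hH heH hev hjt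
    refine ⟨_, (hl.take hj).append hq, List.subset_append_left _ _, fun x hx => ?_⟩
    rcases List.mem_append.mp hx with hx | hx
    exacts [.inl hx, .inr (hqH x hx)]

/- Take `i` minimal with `l[i] ∉ H` and `j ≥ i` minimal with `tgt l[j]` on `H` or equal to `t`.
Running along `l` up to `l[j]` and then inside `H` to `t` gives a path `w` with
`H ⊂ H ∪ w ⊆ H ∪ l`, so the covering hypothesis forces every new arc of `l` into `l[..j]`. -/
theorem exists_ear_segment (ha : IsAcyclicDigraph src tgt) (hH : H ∈ unionOfPaths src tgt s t)
    (hl : IsPathFrom src tgt s t l)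
    (hcov : ∀ W ∈ unionOfPaths src tgt s t, H ⊂ W → W ⊆ H ∪ l.toFinset → W = H ∪ l.toFinset)
    (hnew : ∃ m, ∃ hm : m < l.length, l[m] ∉ H) :
    ∃ i j, (∀ m (hm : m < l.length), l[m] ∉ H → i ≤ m ∧ m ≤ j) ∧
      ∀ m (hm : m < l.length), i ≤ m → m < j →
        tgt l[m] ≠ t ∧ ∀ e ∈ H, src e ≠ tgt l[m] ∧ tgt e ≠ tgt l[m] := by
  classical
  obtain ⟨hi, hiH⟩ := Nat.find_spec hnew
  set i := Nat.find hnew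
  have htouch : ∃ j, i ≤ j ∧ ∃ hj : j < l.length,
      tgt l[j] = t ∨ ∃ e ∈ H, src e = tgt l[j] ∨ tgt e = tgt l[j] :=
    ⟨l.length - 1, by omega, by omega, .inl hl.tgt_getElem_last⟩
  obtain ⟨hij, hj, hjtouch⟩ := Nat.find_spec htouch
  set j := Nat.find htouch
  refine ⟨i, j, fun m hm hmH => ⟨Nat.find_min' hnew ⟨hm, hmH⟩, ?_⟩, fun m hm him hmj => ?_⟩
  · obtain ⟨w, hw, htake, hwsub⟩ := exists_path_extending_take hH hl hj hjtouch
    have hiw : l[i] ∈ w := htake (List.mem_iff_getElem.mpr ⟨i, by simp; omega, by simp⟩)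
    have hW : H ∪ w.toFinset = H ∪ l.toFinset := by
      refine hcov _ (union_mem_unionOfPaths hH ⟨w, hw, ha.nodup_of_isChain hw.isChain, rfl⟩)
        ((ssubset_iff_of_subset subset_union_left).mpr
          ⟨l[i], mem_union_right _ (List.mem_toFinset.mpr hiw), hiH⟩)
        (union_subset subset_union_left fun x hx => ?_)
      rcases hwsub x (List.mem_toFinset.mp hx) with hx | hx
      exacts [mem_union_right _ (List.mem_toFinset.mpr (List.mem_of_mem_take hx)),
        mem_union_left _ hx]
    have hmW : l[m] ∈ H ∪ w.toFinset := hW ▸ mem_union_right _ (by simp)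
    rcases hwsub _ (List.mem_toFinset.mp ((mem_union.mp hmW).resolve_left hmH)) with hmt | hmH'
    · obtain ⟨m', hm', hm'm⟩ := List.mem_iff_getElem.mp hmt
      rw [List.getElem_take] at hm'm
      have := ha.src_getElem_inj hl.isChain _ hm (congrArg src hm'm)
      simp at hm'
      omega
    · exact absurd hmH' hmH
  · have hnot := Nat.find_min htouch hmj
    exact ⟨fun h => hnot ⟨him, hm, .inl h⟩, fun e he =>
      ⟨fun h => hnot ⟨him, hm, .inr ⟨e, he, .inl h⟩⟩, fun h => hnot ⟨him, hm, .inr ⟨e, he, .inr h⟩⟩⟩⟩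

variable [Fintype E] {P : Finset E} {f : E → ℝ}

theorem exists_eq_on_sdiff_of_covBy (ha : IsAcyclicDigraph src tgt)
    (hH : H ∈ unionOfPaths src tgt s t) (hP : P ∈ pathEdgeSets src tgt s t)
    (hcov : ∀ W ∈ unionOfPaths src tgt s t, H ⊂ W → W ⊆ H ∪ P → W = H ∪ P)
    (hf : f ∈ conservedFlows src tgt s t) (hsupp : ∀ e ∉ H ∪ P, f e = 0) :
    ∃ a, ∀ e ∈ P \ H, f e = a := by
  obtain ⟨l, hl, -, rfl⟩ := hP
  by_cases hnew : ∃ m, ∃ hm : m < l.length, l[m] ∉ H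
  swap
  · refine ⟨0, fun e he => absurd ?_ hnew⟩
    obtain ⟨heP, heH⟩ := mem_sdiff.mp he
    obtain ⟨m, hm, rfl⟩ := List.mem_iff_getElem.mp (List.mem_toFinset.mp heP)
    exact ⟨m, hm, heH⟩
  obtain ⟨i, j, hseg, hfresh⟩ := exists_ear_segment ha hH hl hcov hnew
  have hi : i < l.length := by
    obtain ⟨m, hm, hmH⟩ := hnew
    exact (hseg m hm hmH).1.trans_lt hm
  have hstep : ∀ m (hm : m + 1 < l.length), i ≤ m → m < j → f l[m] = f l[m + 1] := by
    intro m hm him hmj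
    obtain ⟨hvt, hvH⟩ := hfresh m (by omega) him hmj
    refine apply_getElem_eq_apply_succ ha hl hf hm hvt fun e hel hev => hsupp e ?_
    simp only [mem_union, List.mem_toFinset, hel, or_false]
    intro heH
    rcases hev with hev | hev
    exacts [(hvH e heH).1 hev, (hvH e heH).2 hev]
  have hconst : ∀ m (hm : m < l.length), i ≤ m → m ≤ j → f l[m] = f l[i] := by
    intro m hm him hmj
    induction m, him using Nat.le_induction with
    | base => rfl
    | succ m him ih => rw [← hstep m hm him (by omega), ih (by omega) (by omega)]
  refine ⟨f l[i], fun e he => ?_⟩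
  obtain ⟨heP, heH⟩ := mem_sdiff.mp he
  obtain ⟨m, hm, rfl⟩ := List.mem_iff_getElem.mp (List.mem_toFinset.mp heP)
  exact hconst m hm (hseg m hm heH).1 (hseg m hm heH).2

end Ears

section EarDecomposition

variable [DecidableEq E] {N : ℕ}

/-- The paper's `H_{n-1}`. -/
def prefixUnion (p : Fin N → Finset E) (n : ℕ) : Finset E :=
  (univ.filter fun i : Fin N => (i : ℕ) < n).biUnion p

lemma prefixUnion_zero (p : Fin N → Finset E) : prefixUnion p 0 = ∅ := by
  simp [prefixUnion]

lemma prefixUnion_succ (p : Fin N → Finset E) {n : ℕ} (hn : n < N) :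
    prefixUnion p (n + 1) = prefixUnion p n ∪ p ⟨n, hn⟩ := by
  ext e
  simp only [prefixUnion, mem_union, mem_biUnion, mem_filter, mem_univ, true_and]
  constructor
  · rintro ⟨i, hi, he⟩
    rcases Nat.lt_succ_iff_lt_or_eq.mp hi with hi | hi
    · exact .inl ⟨i, hi, he⟩
    · obtain rfl : i = ⟨n, hn⟩ := Fin.ext hi
      exact .inr he
  · rintro (⟨i, hi, he⟩ | he)
    exacts [⟨i, by omega, he⟩, ⟨_, Nat.lt_succ_self n, he⟩]

lemma prefixUnion_self (p : Fin N → Finset E) : prefixUnion p N = univ.biUnion p := by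
  simp [prefixUnion]

lemma prefixUnion_mem_unionOfPaths {p : Fin N → Finset E}
    (hp : ∀ k, p k ∈ pathEdgeSets src tgt s t) (n : ℕ) :
    prefixUnion p n ∈ unionOfPaths src tgt s t :=
  biUnion_mem_unionOfPaths _ fun k _ => hp k

variable [Fintype E]

theorem mem_span_indicator_of_ear (ha : IsAcyclicDigraph src tgt) {p : Fin N → Finset E}
    (hp : ∀ k, p k ∈ pathEdgeSets src tgt s t)
    (hcov : ∀ k : Fin N, ∀ W ∈ unionOfPaths src tgt s t, prefixUnion p k ⊂ W →
      W ⊆ prefixUnion p k ∪ p k → W = prefixUnion p k ∪ p k)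
    {n : ℕ} (hn : n ≤ N) {f : E → ℝ} (hf : f ∈ conservedFlows src tgt s t)
    (hsupp : ∀ e ∉ prefixUnion p n, f e = 0) :
    f ∈ Submodule.span ℝ (Set.range fun i => (p i : Set E).indicator 1) := by
  induction n generalizing f with
  | zero =>
    obtain rfl : f = 0 := funext fun e => hsupp e (by simp [prefixUnion_zero])
    exact zero_mem _
  | succ n ih =>
    rw [prefixUnion_succ p hn] at hsupp
    set S := Submodule.span ℝ (Set.range fun i => (p i : Set E).indicator (1 : E → ℝ))
    set k : Fin N := ⟨n, hn⟩
    set g := (p k : Set E).indicator (1 : E → ℝ)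
    obtain ⟨a, hconst⟩ := exists_eq_on_sdiff_of_covBy ha (prefixUnion_mem_unionOfPaths hp n)
      (hp k) (hcov k) hf hsupp
    have hgspan : g ∈ S := Submodule.subset_span ⟨k, rfl⟩
    have hrest : f - a • g ∈ S := by
      refine ih (by omega) (sub_mem hf (Submodule.smul_mem _ a
        (indicator_mem_conservedFlows ha (hp k)))) fun e he => ?_
      by_cases hek : e ∈ p k
      · simp [g, hek, hconst e (mem_sdiff.mpr ⟨hek, he⟩)]
      · simp [g, hek, hsupp e (by simp [he, hek])]
    simpa using add_mem hrest (Submodule.smul_mem _ a hgspan)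

end EarDecomposition

end Development

open Classical in
theorem stmt16_general (V E : Type) [Fintype E] [DecidableEq E]
    (src tgt : E → V) (s t : V)
    (hacyc : IsAcyclicDigraph src tgt)
    (D : ℕ) (p : Fin (D + 1) → Finset E)
    (hp : ∀ k, p k ∈ pathEdgeSets src tgt s t)
    (hcov : ∀ k : Fin (D + 1),
      ((Finset.univ.filter (fun i => i < k)).biUnion p) ⊂
        ((Finset.univ.filter (fun i => i ≤ k)).biUnion p) ∧
      ∀ W ∈ unionOfPaths src tgt s t,
        ((Finset.univ.filter (fun i => i < k)).biUnion p) ⊂ W →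
        W ⊆ ((Finset.univ.filter (fun i => i ≤ k)).biUnion p) →
        W = ((Finset.univ.filter (fun i => i ≤ k)).biUnion p)) :
    ∀ f : E → ℝ,
      (∀ e, e ∉ Finset.univ.biUnion p → f e = 0) →
      (∑ e ∈ Finset.univ.filter (fun e => src e = s), f e = 1) →
      (∀ v : V, v ≠ s → v ≠ t →
        ∑ e ∈ Finset.univ.filter (fun e => tgt e = v), f e =
          ∑ e ∈ Finset.univ.filter (fun e => src e = v), f e) →
      ∃ c : Fin (D + 1) → ℝ, ∑ i, c i = 1 ∧
        ∀ e, f e = ∑ i, c i * (if e ∈ p i then (1 : ℝ) else 0) := by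
  intro f hsupp hvalue hcons
  have hlt (k : Fin (D + 1)) : (univ.filter (· < k)).biUnion p = prefixUnion p k := by
    simp only [prefixUnion, Fin.lt_def]
  have hle (k : Fin (D + 1)) : (univ.filter (· ≤ k)).biUnion p = prefixUnion p k ∪ p k := by
    rw [← prefixUnion_succ p k.isLt]
    simp only [prefixUnion, Fin.le_iff_val_le_val, Nat.lt_succ_iff]
  have hspan := mem_span_indicator_of_ear hacyc hp
    (fun k => by simpa only [hlt, hle] using (hcov k).2) le_rfl hcons
    (fun e he => hsupp e (prefixUnion_self p ▸ he))
  obtain ⟨c, rfl⟩ := (Submodule.mem_span_range_iff_exists_fun ℝ).mp hspan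
  refine ⟨c, ?_, fun e => by simp [Finset.sum_apply, Set.indicator_apply]⟩
  rw [← hvalue, ← arcSum_apply, map_sum]
  simp [arcSum_indicator_of_mem_pathEdgeSets hacyc (hp _)]

open Classical in
/-- Given an ear decomposition `∅ = H₋₁ ⋖ H₀ ⋖ … ⋖ H_D = H` in `U(P_G)`, with
`H_k = H_{k-1} ∪ p_k` for `s`-`t` paths `p₀, …, p_D`, every vector satisfying the
flow equations on `H` (unit total flow out of `s`, conservation at internal
vertices, zero outside `H`; nonnegativity not required) is an affine combination
of the indicator vectors `𝟙(p₀), …, 𝟙(p_D)`. -/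
theorem stmt16 (V E : Type) [Fintype V] [Fintype E] [DecidableEq E]
    (src tgt : E → V) (s t : V)
    (hacyc : IsAcyclicDigraph src tgt)
    (hs : IsUniqueSource src tgt s) (ht : IsUniqueSink src tgt t)
    (D : ℕ) (p : Fin (D + 1) → Finset E)
    (hp : ∀ k, p k ∈ pathEdgeSets src tgt s t)
    (hcov : ∀ k : Fin (D + 1),
      ((Finset.univ.filter (fun i => i < k)).biUnion p) ⊂
        ((Finset.univ.filter (fun i => i ≤ k)).biUnion p) ∧
      ∀ W ∈ unionOfPaths src tgt s t,
        ((Finset.univ.filter (fun i => i < k)).biUnion p) ⊂ W →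
        W ⊆ ((Finset.univ.filter (fun i => i ≤ k)).biUnion p) →
        W = ((Finset.univ.filter (fun i => i ≤ k)).biUnion p)) :
    ∀ f : E → ℝ,
      (∀ e, e ∉ Finset.univ.biUnion p → f e = 0) →
      (∑ e ∈ Finset.univ.filter (fun e => src e = s), f e = 1) →
      (∀ v : V, v ≠ s → v ≠ t →
        ∑ e ∈ Finset.univ.filter (fun e => tgt e = v), f e =
          ∑ e ∈ Finset.univ.filter (fun e => src e = v), f e) →
      ∃ c : Fin (D + 1) → ℝ, ∑ i, c i = 1 ∧
        ∀ e, f e = ∑ i, c i * (if e ∈ p i then (1 : ℝ) else 0) :=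
  stmt16_general V E src tgt s t hacyc D p hp hcov
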